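/- For every sequentially congruent partition φ, (π∘σ)²(φ) = φ, where π(λ)_i = i·λ_i + Σ_{j>i} λ_j and σ(φ) is the partition in which i occurs with frequency (φ_i − φ_{i+1})/i. -/

import Mathlib

/-- A partition represented as a weakly decreasing list of positive integers. -/
def IsPartition (l : List ℕ) : Prop :=
  l.Pairwise (· ≥ ·) ∧ ∀ x ∈ l, 0 < x

/-- Sequentially congruent: `λ_i ≡ λ_{i+1} (mod i)` for `1 ≤ i ≤ r-1` and `λ_r ≡ 0 (mod r)`
(0-indexed, with the convention `λ_{r+1} = 0`). -/
def SeqCongruent (l : List ℕ) : Prop :=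
  ∀ j < l.length, l.getD j 0 ≡ l.getD (j+1) 0 [MOD j+1]

/-- The map `π`: `π(λ)_i = i·λ_i + Σ_{j=i+1}^r λ_j` (1-indexed). -/
def piMap (l : List ℕ) : List ℕ :=
  (List.range l.length).map (fun j => (j+1) * l.getD j 0 + (l.drop (j+1)).sum)

/-- The map `σ`: the partition in which `i` occurs with frequency `(φ_i - φ_{i+1})/i`. -/
def sigmaMap (l : List ℕ) : List ℕ :=
  ((List.range l.length).reverse).flatMap
    (fun j => List.replicate ((l.getD j 0 - l.getD (j+1) 0) / (j+1)) (j+1))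

/-- The conjugate partition: its `i`-th part is the number of parts of `l` that are `≥ i`. -/
def conj (l : List ℕ) : List ℕ :=
  (List.range (l.getD 0 0)).map (fun i => l.countP (fun x => decide (i + 1 ≤ x)))

/-- Frequency congruent: each part `i` occurs with frequency divisible by `i`. -/
def FreqCongruent (l : List ℕ) : Prop :=
  ∀ i, 0 < i → i ∣ l.count i

/-!
On partitions, `σ ∘ π` is conjugation: in `σ (π λ)` the part `i` occurs `λ_i - λ_{i+1}` times.
Applying `π` to the conjugate of `μ` gives, in position `i`, the sum of the parts of `μ` that are
at least `i`. For a sequentially congruent `φ` of length `r`, the parts of `μ = σ φ` that are at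
least `i` are the `j ≥ i`, each contributing `j · (φ_j - φ_{j+1}) / j = φ_j - φ_{j+1}`, so their
sum telescopes to `φ_i`; and the largest part of `μ` is `r`, because `r ∣ φ_r > 0`.
Hence `π (σ (π (σ φ))) = π (conj μ) = φ`.
-/

open Finset

section Antitone

variable {l : List ℕ}

theorem antitone_getD_of_pairwise_ge (hl : l.Pairwise (· ≥ ·)) : Antitone (l.getD · 0) := by
  intro i j hij
  show l.getD j 0 ≤ l.getD i 0
  by_cases hj : j < l.length
  · rw [List.getD_eq_getElem _ _ hj, List.getD_eq_getElem _ _ (hij.trans_lt hj)]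
    rcases hij.lt_or_eq with h | rfl
    · exact List.pairwise_iff_getElem.1 hl i j _ hj h
    · rfl
  · rw [List.getD_eq_default _ _ (not_lt.1 hj)]
    exact Nat.zero_le _

theorem le_getD_zero_of_pairwise_ge (hl : l.Pairwise (· ≥ ·)) {x : ℕ} (hx : x ∈ l) :
    x ≤ l.getD 0 0 := by
  obtain ⟨i, hi, rfl⟩ := List.mem_iff_getElem.1 hx
  rw [← List.getD_eq_getElem _ 0 hi]
  exact antitone_getD_of_pairwise_ge hl (Nat.zero_le i)

theorem sum_Ico_tsub_of_antitone {f : ℕ → ℕ} (hf : Antitone f) {m n : ℕ} (hmn : m ≤ n) :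
    ∑ k ∈ Ico m n, (f k - f (k + 1)) = f m - f n := by
  induction n, hmn using Nat.le_induction with
  | base => simp
  | succ n hmn ih =>
    rw [sum_Ico_succ_top hmn, ih]
    have : f n ≤ f m := hf hmn
    have : f (n + 1) ≤ f n := hf n.le_succ
    omega

end Antitone

section OfMultiplicities

def ofMultiplicities (r : ℕ) (c : ℕ → ℕ) : List ℕ :=
  (List.range r).reverse.flatMap fun j => List.replicate (c j) (j + 1)

variable {r : ℕ} {c : ℕ → ℕ}

theorem ofMultiplicities_succ :
    ofMultiplicities (r + 1) c = List.replicate (c r) (r + 1) ++ ofMultiplicities r c := by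
  simp [ofMultiplicities, List.range_succ]

theorem ofMultiplicities_succ' :
    ofMultiplicities (r + 1) c =
      (ofMultiplicities r fun j => c (j + 1)).map (· + 1) ++ List.replicate (c 0) 1 := by
  simp [ofMultiplicities, List.range_succ_eq_map, ← List.map_reverse, List.flatMap_map,
    List.map_flatMap]

theorem pos_and_le_of_mem_ofMultiplicities {x : ℕ} (hx : x ∈ ofMultiplicities r c) :
    0 < x ∧ x ≤ r := by
  simp only [ofMultiplicities, List.mem_flatMap, List.mem_reverse, List.mem_range,
    List.mem_replicate] at hx
  omega

theorem pairwise_ge_ofMultiplicities : (ofMultiplicities r c).Pairwise (· ≥ ·) := by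
  induction r with
  | zero => simp [ofMultiplicities]
  | succ r ih =>
    rw [ofMultiplicities_succ, List.pairwise_append]
    refine ⟨List.pairwise_replicate.2 (Or.inr le_rfl), ih, fun a ha b hb => ?_⟩
    rw [List.eq_of_mem_replicate ha]
    exact (pos_and_le_of_mem_ofMultiplicities hb).2.trans r.le_succ

theorem sum_filter_ofMultiplicities (m : ℕ) :
    ((ofMultiplicities r c).filter (m + 1 ≤ ·)).sum = ∑ k ∈ Ico m r, (k + 1) * c k := by
  induction r with
  | zero => simp [ofMultiplicities]
  | succ r ih =>
    rw [ofMultiplicities_succ, List.filter_append, List.sum_append, ih, List.filter_replicate]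
    by_cases h : m ≤ r
    · simp [sum_Ico_succ_top h, h, List.sum_replicate, add_comm, mul_comm]
    · simp [h, Ico_eq_empty_of_le (show r ≤ m by omega),
        Ico_eq_empty_of_le (show r + 1 ≤ m by omega)]

theorem getD_zero_ofMultiplicities_succ (hc : c r ≠ 0) :
    (ofMultiplicities (r + 1) c).getD 0 0 = r + 1 := by
  obtain ⟨q, hq⟩ := Nat.exists_eq_succ_of_ne_zero hc
  simp [ofMultiplicities_succ, hq, List.replicate_succ]

theorem sigmaMap_eq_ofMultiplicities (l : List ℕ) :
    sigmaMap l = ofMultiplicities l.length fun j => (l.getD j 0 - l.getD (j + 1) 0) / (j + 1) :=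
  rfl

theorem pairwise_ge_sigmaMap (l : List ℕ) : (sigmaMap l).Pairwise (· ≥ ·) :=
  pairwise_ge_ofMultiplicities

end OfMultiplicities

section Conjugate

theorem conj_cons {a : ℕ} {t : List ℕ} (hl : (a :: t).Pairwise (· ≥ ·)) :
    conj (a :: t) = (conj t).map (· + 1) ++ List.replicate (a - t.getD 0 0) 1 := by
  have hle : ∀ x ∈ t, x ≤ t.getD 0 0 := fun _ => le_getD_zero_of_pairwise_ge hl.of_cons
  have hb : t.getD 0 0 ≤ a := by
    cases t with
    | nil => simp
    | cons b s => exact List.rel_of_pairwise_cons hl List.mem_cons_self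
  obtain ⟨d, rfl⟩ := Nat.exists_eq_add_of_le hb
  unfold conj
  rw [List.getD_cons_zero, Nat.add_sub_cancel_left]
  generalize t.getD 0 0 = b at hle ⊢
  rw [List.range_add, List.map_append, List.map_map, List.map_map]
  congr 1
  · refine List.map_congr_left fun i hi => ?_
    rw [List.mem_range] at hi
    simp [List.countP_cons]
    omega
  · refine List.eq_replicate_iff.2 ⟨by simp, fun y hy => ?_⟩
    obtain ⟨i, hi, rfl⟩ := List.mem_map.1 hy
    rw [List.mem_range] at hi
    have : t.countP (fun x => decide (b + i + 1 ≤ x)) = 0 :=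
      List.countP_eq_zero.2 fun x hx => by have := hle x hx; simp; omega
    simp only [Function.comp_apply, List.countP_cons, this]
    simp
    omega

theorem ofMultiplicities_sub_getD_eq_conj {l : List ℕ} (hl : l.Pairwise (· ≥ ·)) :
    ofMultiplicities l.length (fun j => l.getD j 0 - l.getD (j + 1) 0) = conj l := by
  induction l with
  | nil => rfl
  | cons a t ih =>
    rw [List.length_cons, ofMultiplicities_succ', conj_cons hl, ← ih hl.of_cons]
    simp

end Conjugate

section PiMap

theorem sum_drop_eq_getD_add (l : List ℕ) (j : ℕ) :
    (l.drop j).sum = l.getD j 0 + (l.drop (j + 1)).sum := by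
  induction l generalizing j with
  | nil => simp
  | cons a t ih =>
    cases j with
    | zero => simp
    | succ j => simpa using ih j

theorem length_piMap (l : List ℕ) : (piMap l).length = l.length := by
  simp [piMap]

theorem getD_piMap (l : List ℕ) (j : ℕ) :
    (piMap l).getD j 0 = (j + 1) * l.getD j 0 + (l.drop (j + 1)).sum := by
  by_cases hj : j < l.length
  · simp [piMap, hj]
  · simp [piMap, not_lt.1 hj, List.drop_eq_nil_of_le (by omega : l.length ≤ j + 1)]

theorem getD_piMap_sub_getD_piMap_succ {l : List ℕ} (hl : l.Pairwise (· ≥ ·)) (j : ℕ) :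
    (piMap l).getD j 0 - (piMap l).getD (j + 1) 0 =
      (j + 1) * (l.getD j 0 - l.getD (j + 1) 0) := by
  have hle : l.getD (j + 1) 0 ≤ l.getD j 0 := antitone_getD_of_pairwise_ge hl j.le_succ
  obtain ⟨d, hd⟩ := Nat.exists_eq_add_of_le hle
  rw [getD_piMap, getD_piMap, sum_drop_eq_getD_add l (j + 1), hd, Nat.add_sub_cancel_left]
  apply Nat.sub_eq_of_eq_add
  ring

theorem sigmaMap_piMap {l : List ℕ} (hl : l.Pairwise (· ≥ ·)) : sigmaMap (piMap l) = conj l := by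
  rw [sigmaMap_eq_ofMultiplicities, length_piMap, ← ofMultiplicities_sub_getD_eq_conj hl]
  congr 1
  funext j
  rw [getD_piMap_sub_getD_piMap_succ hl, Nat.mul_div_cancel_left _ j.succ_pos]

theorem piMap_map_range (n : ℕ) (g : ℕ → ℕ) :
    piMap ((List.range n).map g) =
      (List.range n).map fun j => (j + 1) * g j + ∑ i ∈ Ico (j + 1) n, g i := by
  simp only [piMap, List.length_map, List.length_range]
  refine List.map_congr_left fun j hj => ?_
  rw [List.mem_range] at hj
  rw [← List.map_drop, List.range_eq_range', List.drop_range']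
  simp [hj]
  rfl

theorem mul_countP_add_sum_countP {l : List ℕ} {n : ℕ} (hl : ∀ x ∈ l, x ≤ n) (j : ℕ) :
    (j + 1) * l.countP (j + 1 ≤ ·) + ∑ i ∈ Ico (j + 1) n, l.countP (i + 1 ≤ ·) =
      (l.filter (j + 1 ≤ ·)).sum := by
  induction l with
  | nil => simp
  | cons x t ih =>
    have hx : ∑ i ∈ Ico (j + 1) n, (if i + 1 ≤ x then 1 else 0) = x - (j + 1) := by
      have := hl x List.mem_cons_self
      rw [sum_boole]
      simp [Ico_filter_lt]
      omega
    have ht := ih fun y hy => hl y (List.mem_cons_of_mem x hy)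
    simp only [List.countP_cons, sum_add_distrib, List.filter_cons, mul_add]
    by_cases h : j + 1 ≤ x <;> simp [h] at hx ht ⊢ <;> omega

theorem piMap_conj {l : List ℕ} (hl : l.Pairwise (· ≥ ·)) :
    piMap (conj l) = (List.range (l.getD 0 0)).map fun j => (l.filter (j + 1 ≤ ·)).sum := by
  rw [conj, piMap_map_range]
  exact List.map_congr_left fun j _ =>
    mul_countP_add_sum_countP (fun _ => le_getD_zero_of_pairwise_ge hl) j

end PiMap

section SeqCongruent

variable {l : List ℕ}

theorem SeqCongruent.dvd_getD_sub_getD_succ (hsc : SeqCongruent l) (hl : l.Pairwise (· ≥ ·))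
    {k : ℕ} (hk : k < l.length) : k + 1 ∣ l.getD k 0 - l.getD (k + 1) 0 :=
  (Nat.modEq_iff_dvd' (antitone_getD_of_pairwise_ge hl k.le_succ)).1 (hsc k hk).symm

theorem SeqCongruent.sum_filter_sigmaMap (hsc : SeqCongruent l) (hl : l.Pairwise (· ≥ ·))
    {j : ℕ} (hj : j ≤ l.length) : ((sigmaMap l).filter (j + 1 ≤ ·)).sum = l.getD j 0 := by
  rw [sigmaMap_eq_ofMultiplicities, sum_filter_ofMultiplicities]
  calc ∑ k ∈ Ico j l.length, (k + 1) * ((l.getD k 0 - l.getD (k + 1) 0) / (k + 1))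
      = ∑ k ∈ Ico j l.length, (l.getD k 0 - l.getD (k + 1) 0) :=
        sum_congr rfl fun k hk =>
          Nat.mul_div_cancel' (hsc.dvd_getD_sub_getD_succ hl (mem_Ico.1 hk).2)
    _ = l.getD j 0 - l.getD l.length 0 :=
        sum_Ico_tsub_of_antitone (antitone_getD_of_pairwise_ge hl) hj
    _ = l.getD j 0 := by simp

theorem SeqCongruent.getD_zero_sigmaMap (hsc : SeqCongruent l) (hl : IsPartition l) :
    (sigmaMap l).getD 0 0 = l.length := by
  rcases hr : l.length with _ | r
  · rw [List.length_eq_zero_iff.1 hr]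
    rfl
  · rw [sigmaMap_eq_ofMultiplicities, hr]
    apply getD_zero_ofMultiplicities_succ
    have hr' : r < l.length := by omega
    have hlast : l.getD (r + 1) 0 = 0 := List.getD_eq_default _ _ (by omega)
    have hpos : 0 < l.getD r 0 := by
      rw [List.getD_eq_getElem _ _ hr']
      exact hl.2 _ (List.getElem_mem hr')
    have hdvd := hsc.dvd_getD_sub_getD_succ hl.1 hr'
    rw [hlast, Nat.sub_zero] at hdvd ⊢
    exact (Nat.div_pos (Nat.le_of_dvd hpos hdvd) r.succ_pos).ne'

end SeqCongruent

theorem stmt10 (l : List ℕ) (hl : IsPartition l) (hsc : SeqCongruent l) :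
    piMap (sigmaMap (piMap (sigmaMap l))) = l := by
  have hμ := pairwise_ge_sigmaMap l
  rw [sigmaMap_piMap hμ, piMap_conj hμ, hsc.getD_zero_sigmaMap hl]
  refine List.ext_getElem (by simp) fun j hj _ => ?_
  simp only [List.getElem_map, List.getElem_range]
  rw [hsc.sum_filter_sigmaMap hl.1 (by simpa using hj.le), List.getD_eq_getElem]
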